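/- arXiv:2311.10546 — 4 statements merged into one kernel-verified Lean document; each statement's English description precedes it below -/
import Mathlib

section
/- Let n ≥ 1, let b_{ij} = b_{ji} > 0 for i ≠ j be symmetric friction coefficients, let ρ_1,…,ρ_n > 0, θ > 0, and let d_1,…,d_n ∈ ℝ³ satisfy Σ_{i=1}^n d_i = 0. Then there exists a unique n-tuple (u_1,…,u_n) ∈ (ℝ³)^n such that −θ Σ_{j≠i} b_{ij} ρ_i ρ_j (u_i − u_j) = d_i for every i ∈ {1,…,n} and Σ_{i=1}^n ρ_i u_i = 0. -/
/-!
Write `A u i = ∑ j, c i j • (u i - u j)` with `c i j = b i j ρ i ρ j`. Since `c` is symmetric,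
`∑ i, A u i = 0` and `∑ i, ⟪A u i, u i⟫ = ½ ∑ i j, c i j ‖u i - u j‖²`, so the kernel of `A`
consists of the constant families. The map `u ↦ A u + ρ ⊗ ∑ j, ρ j • u j` is therefore injective,
hence surjective in finite dimension. A preimage of data with `∑ i, d i = 0` has
`∑ j, ρ j • u j = 0` (sum the equations over `i`), so it solves the constrained system.
-/

open Finset RealInnerProductSpace

namespace Finset

theorem sum_sum_eq_inv_two_smul_sum_sum_add_swap {ι 𝕜 M : Type*} [Fintype ι] [DivisionRing 𝕜]
    [NeZero (2 : 𝕜)] [AddCommGroup M] [Module 𝕜 M] (f : ι → ι → M) :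
    ∑ i, ∑ j, f i j = (2 : 𝕜)⁻¹ • ∑ i, ∑ j, (f i j + f j i) := by
  simp only [sum_add_distrib]
  rw [sum_comm (f := fun i j => f j i), ← two_smul 𝕜, smul_smul, inv_mul_cancel₀ two_ne_zero,
    one_smul]

end Finset

namespace MaxwellStefan

variable {ι E : Type*} [Fintype ι] {c : ι → ι → ℝ} {ρ : ι → ℝ}

section Module

variable [AddCommGroup E] [Module ℝ E]

def frictionOp (c : ι → ι → ℝ) : (ι → E) →ₗ[ℝ] ι → E :=
  LinearMap.pi fun i =>
    ∑ j, c i j • (LinearMap.proj (R := ℝ) (φ := fun _ : ι => E) i - LinearMap.proj j)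

@[simp]
theorem frictionOp_apply (c : ι → ι → ℝ) (u : ι → E) (i : ι) :
    frictionOp c u i = ∑ j, c i j • (u i - u j) := by
  simp [frictionOp]

def weightedSum (ρ : ι → ℝ) : (ι → E) →ₗ[ℝ] E :=
  ∑ j, ρ j • LinearMap.proj (R := ℝ) (φ := fun _ : ι => E) j

theorem weightedSum_apply (ρ : ι → ℝ) (u : ι → E) : weightedSum ρ u = ∑ j, ρ j • u j := by
  simp [weightedSum]

theorem weightedSum_eq_zero_of_sum_smul_eq_zero (hρ : ∀ i, 0 < ρ i) {u : ι → E}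
    (h : (∑ i, ρ i) • weightedSum ρ u = 0) : weightedSum ρ u = 0 := by
  rcases isEmpty_or_nonempty ι with hι | ⟨⟨i⟩⟩
  · simp [weightedSum_apply]
  · exact (smul_eq_zero.mp h).resolve_left (sum_pos (fun j _ => hρ j) ⟨i, mem_univ i⟩).ne'

theorem sum_frictionOp_apply (hc : ∀ i j, c i j = c j i) (u : ι → E) :
    ∑ i, frictionOp c u i = 0 := by
  simp only [frictionOp_apply]
  rw [sum_sum_eq_inv_two_smul_sum_sum_add_swap (𝕜 := ℝ)]
  simp [hc, ← smul_add]

def regularizedFrictionOp (c : ι → ι → ℝ) (ρ : ι → ℝ) : (ι → E) →ₗ[ℝ] ι → E :=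
  frictionOp c + LinearMap.pi fun i => ρ i • weightedSum ρ

theorem regularizedFrictionOp_apply (u : ι → E) (i : ι) :
    regularizedFrictionOp c ρ u i = frictionOp c u i + ρ i • weightedSum ρ u := rfl

theorem sum_regularizedFrictionOp_apply (hc : ∀ i j, c i j = c j i) (u : ι → E) :
    ∑ i, regularizedFrictionOp c ρ u i = (∑ i, ρ i) • weightedSum ρ u := by
  simp only [regularizedFrictionOp_apply, sum_add_distrib, sum_frictionOp_apply hc, zero_add,
    sum_smul]

end Module

variable [NormedAddCommGroup E] [InnerProductSpace ℝ E]

theorem sum_inner_frictionOp_apply (hc : ∀ i j, c i j = c j i) (u : ι → E) :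
    ∑ i, ⟪frictionOp c u i, u i⟫ = (∑ i, ∑ j, c i j * ‖u i - u j‖ ^ 2) / 2 := by
  simp only [frictionOp_apply, sum_inner, real_inner_smul_left]
  rw [sum_sum_eq_inv_two_smul_sum_sum_add_swap (𝕜 := ℝ), smul_eq_mul, inv_mul_eq_div]
  congr 1
  refine sum_congr rfl fun i _ => sum_congr rfl fun j _ => ?_
  rw [hc j i, ← mul_add, ← neg_sub (u i), inner_neg_left, ← sub_eq_add_neg, ← inner_sub_right,
    real_inner_self_eq_norm_sq]

theorem eq_of_frictionOp_eq_zero (hc : ∀ i j, c i j = c j i) (hpos : ∀ i j, i ≠ j → 0 < c i j)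
    {u : ι → E} (hu : frictionOp c u = 0) (i j : ι) : u i = u j := by
  obtain rfl | hij := eq_or_ne i j
  · rfl
  have hterm : ∀ i j, 0 ≤ c i j * ‖u i - u j‖ ^ 2 := fun i j => by
    obtain rfl | hij := eq_or_ne i j
    · simp
    · exact mul_nonneg (hpos i j hij).le (sq_nonneg _)
  have hzero : ∑ i, ∑ j, c i j * ‖u i - u j‖ ^ 2 = 0 := by
    have := sum_inner_frictionOp_apply hc u
    simp only [hu, Pi.zero_apply, inner_zero_left, sum_const_zero] at this
    linarith
  have hij_zero : c i j * ‖u i - u j‖ ^ 2 = 0 :=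
    (sum_eq_zero_iff_of_nonneg fun _ _ => hterm _ _).mp
      ((sum_eq_zero_iff_of_nonneg fun i _ => sum_nonneg fun j _ => hterm i j).mp hzero i
        (mem_univ i)) j (mem_univ j)
  simpa [(hpos i j hij).ne', sub_eq_zero] using hij_zero

theorem regularizedFrictionOp_injective (hc : ∀ i j, c i j = c j i)
    (hpos : ∀ i j, i ≠ j → 0 < c i j) (hρ : ∀ i, 0 < ρ i) :
    Function.Injective (regularizedFrictionOp (E := E) c ρ) := by
  refine (injective_iff_map_eq_zero _).mpr fun u hu => ?_
  have hs : weightedSum ρ u = 0 := weightedSum_eq_zero_of_sum_smul_eq_zero hρ <| by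
    rw [← sum_regularizedFrictionOp_apply hc, hu]
    simp
  have hconst : ∀ i j, u i = u j := eq_of_frictionOp_eq_zero hc hpos <| funext fun i => by
    simpa [regularizedFrictionOp_apply, hs] using congrFun hu i
  funext i
  have : (∑ j, ρ j) • u i = 0 := by
    rw [← hs, weightedSum_apply, sum_smul]
    exact sum_congr rfl fun j _ => by rw [hconst j i]
  exact (smul_eq_zero.mp this).resolve_left (sum_pos (fun j _ => hρ j) ⟨i, mem_univ i⟩).ne'

theorem existsUnique_frictionOp_eq_and_weightedSum_eq_zero [FiniteDimensional ℝ E]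
    (hc : ∀ i j, c i j = c j i) (hpos : ∀ i j, i ≠ j → 0 < c i j) (hρ : ∀ i, 0 < ρ i)
    {d : ι → E} (hd : ∑ i, d i = 0) :
    ∃! u : ι → E, frictionOp c u = d ∧ weightedSum ρ u = 0 := by
  have hinj := regularizedFrictionOp_injective (E := E) hc hpos hρ
  obtain ⟨u, hu⟩ := LinearMap.injective_iff_surjective.mp hinj d
  have hs : weightedSum ρ u = 0 := weightedSum_eq_zero_of_sum_smul_eq_zero hρ <| by
    rw [← sum_regularizedFrictionOp_apply hc, hu, hd]
  refine ⟨u, ⟨?_, hs⟩, fun v ⟨hv, hvs⟩ => hinj ?_⟩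
  · funext i
    simpa [regularizedFrictionOp_apply, hs] using congrFun hu i
  · rw [hu, ← hv]
    funext i
    simp [regularizedFrictionOp_apply, hvs]

end MaxwellStefan

open MaxwellStefan in
theorem maxwell_stefan_unique_solvability_general
    (n : ℕ)
    (b : Fin n → Fin n → ℝ)
    (hbsymm : ∀ i j, b i j = b j i)
    (hbpos : ∀ i j, i ≠ j → 0 < b i j)
    (ρ : Fin n → ℝ) (hρ : ∀ i, 0 < ρ i)
    (θ : ℝ) (hθ : 0 < θ)
    (d : Fin n → EuclideanSpace ℝ (Fin 3))
    (hd : ∑ i, d i = 0) :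
    ∃! u : Fin n → EuclideanSpace ℝ (Fin 3),
      (∀ i, -(θ • ∑ j ∈ Finset.univ.erase i, (b i j * ρ i * ρ j) • (u i - u j)) = d i)
        ∧ ∑ i, ρ i • u i = 0 := by
  have hc : ∀ i j, b i j * ρ i * ρ j = b j i * ρ j * ρ i := fun i j => by rw [hbsymm]; ring
  have hpos : ∀ i j, i ≠ j → 0 < b i j * ρ i * ρ j := fun i j hij => by
    have := hbpos i j hij; have := hρ i; have := hρ j; positivity
  have hd' : ∑ i, (-θ⁻¹) • d i = 0 := by rw [← smul_sum, hd, smul_zero]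
  refine (existsUnique_congr fun u => ?_).mpr
    (existsUnique_frictionOp_eq_and_weightedSum_eq_zero hc hpos hρ hd')
  rw [weightedSum_apply, funext_iff]
  refine and_congr_left' (forall_congr' fun i => ?_)
  rw [sum_erase _ (by simp), frictionOp_apply, neg_eq_iff_eq_neg, neg_smul, ← smul_neg,
    eq_inv_smul_iff₀ hθ.ne']

theorem maxwell_stefan_unique_solvability
    (n : ℕ) (hn : 1 ≤ n)
    (b : Fin n → Fin n → ℝ)
    (hbsymm : ∀ i j, b i j = b j i)
    (hbpos : ∀ i j, i ≠ j → 0 < b i j)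
    (ρ : Fin n → ℝ) (hρ : ∀ i, 0 < ρ i)
    (θ : ℝ) (hθ : 0 < θ)
    (d : Fin n → EuclideanSpace ℝ (Fin 3))
    (hd : ∑ i, d i = 0) :
    ∃! u : Fin n → EuclideanSpace ℝ (Fin 3),
      (∀ i, -(θ • ∑ j ∈ Finset.univ.erase i, (b i j * ρ i * ρ j) • (u i - u j)) = d i)
        ∧ ∑ i, ρ i • u i = 0 :=
  maxwell_stefan_unique_solvability_general n b hbsymm hbpos ρ hρ θ hθ d hd
end

section
/- Let γ, M > 0 and for each i ∈ {1,…,n} let f_i = f_i(ρ, θ) be a C³ function on a neighborhood of [0, M] × [γ, M] satisfying the Gibbs stability conditions ∂²f_i/∂ρ² > 0 and ∂²f_i/∂θ² < 0 on [0, M] × [γ, M]. Then there exists a constant C > 0 such that for all (ρ_1,…,ρ_n, θ) and (ρ̄_1,…,ρ̄_n, θ̄) with 0 ≤ ρ_i, ρ̄_i ≤ M, γ ≤ Σ_i ρ_i ≤ M, γ ≤ Σ_i ρ̄_i ≤ M and γ ≤ θ, θ̄ ≤ M, one has Σ_{i=1}^n [ f_i(ρ_i, θ) − f_i(ρ̄_i,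 θ̄) − ∂_ρ f_i(ρ̄_i, θ̄)(ρ_i − ρ̄_i) − ∂_θ f_i(ρ̄_i, θ̄)(θ − θ̄) ] + ( Σ_{i=1}^n (−∂_θ f_i(ρ_i, θ)) − Σ_{i=1}^n (−∂_θ f_i(ρ̄_i, θ̄)) ) (θ − θ̄) ≥ C ( Σ_{i=1}^n |ρ_i − ρ̄_i|² + |θ − θ̄|² ). -/
/-!
Split each component of the density at the intermediate state `(ρᵢ, θ̄)`: it becomes
`f(ρ, θ̄) - f(ρ̄, θ̄) - ∂_ρ f(ρ̄, θ̄)(ρ - ρ̄)`, the Bregman divergence of the convex function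
`f(·, θ̄)`, plus `f(ρ, θ) - f(ρ, θ̄) - ∂_θ f(ρ, θ)(θ - θ̄)`, the Bregman divergence of the convex
function `-f(ρ, ·)` taken at `θ`. The second partial derivatives are continuous, so by the Gibbs
conditions they are bounded away from zero on the compact box, and a second-order Taylor bound
makes each divergence at least a fixed multiple of the squared increment. Summing over the
components, the `θ`-term occurs `n ≥ 1` times.
-/

open Set

theorem ConvexOn.mul_sub_le_sub_of_hasDerivAt {S : Set ℝ} {f : ℝ → ℝ} {f' x y : ℝ}
    (hfc : ConvexOn ℝ S f) (hx : x ∈ S) (hy : y ∈ S) (hf : HasDerivAt f f' x) :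
    f' * (y - x) ≤ f y - f x := by
  rcases lt_trichotomy x y with hxy | rfl | hxy
  · have := hfc.le_slope_of_hasDerivAt hx hy hxy hf
    rwa [slope_def_field, le_div_iff₀ (sub_pos.2 hxy)] at this
  · simp
  · have := hfc.slope_le_of_hasDerivAt hy hx hxy hf
    rw [slope_def_field, div_le_iff₀ (sub_pos.2 hxy)] at this
    linarith

theorem mul_sq_le_sub_sub_mul_of_le_deriv2 {g g' g'' : ℝ → ℝ} {x y c : ℝ}
    (hg : ∀ t ∈ uIcc x y, HasDerivAt g (g' t) t)
    (hg' : ∀ t ∈ uIcc x y, HasDerivAt g' (g'' t) t)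
    (hc : ∀ t ∈ uIcc x y, c ≤ g'' t) :
    c / 2 * (y - x) ^ 2 ≤ g y - g x - g' x * (y - x) := by
  have hderiv : ∀ t ∈ uIcc x y, HasDerivAt (fun t => g t - c / 2 * t ^ 2) (g' t - c * t) t :=
    fun t ht => ((hg t ht).sub ((hasDerivAt_pow 2 t).const_mul (c / 2))).congr_deriv (by ring)
  have hderiv2 : ∀ t ∈ uIcc x y, HasDerivAt (fun t => g' t - c * t) (g'' t - c) t :=
    fun t ht => ((hg' t ht).sub ((hasDerivAt_id t).const_mul c)).congr_deriv (by ring)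
  -- `g - c t² / 2` is convex, so it lies above its tangent at `x`.
  have hconvex : ConvexOn ℝ (uIcc x y) (fun t => g t - c / 2 * t ^ 2) :=
    convexOn_of_hasDerivWithinAt2_nonneg (convex_uIcc x y)
      (fun t ht => (hderiv t ht).continuousAt.continuousWithinAt)
      (fun t ht => (hderiv t (interior_subset ht)).hasDerivWithinAt)
      (fun t ht => (hderiv2 t (interior_subset ht)).hasDerivWithinAt)
      (fun t ht => sub_nonneg.2 (hc t (interior_subset ht)))
  have := hconvex.mul_sub_le_sub_of_hasDerivAt left_mem_uIcc right_mem_uIcc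
    (hderiv x left_mem_uIcc)
  linarith

section PartialDerivatives

variable {f : ℝ → ℝ → ℝ} {U : Set (ℝ × ℝ)}

theorem hasDerivAt_fderiv_apply_slice_fst (hU : IsOpen U)
    (hf : DifferentiableOn ℝ (fun p : ℝ × ℝ => f p.1 p.2) U) {p : ℝ × ℝ} (hp : p ∈ U) :
    HasDerivAt (fun a => f a p.2) (fderiv ℝ (fun p : ℝ × ℝ => f p.1 p.2) p (1, 0)) p.1 := by
  have hslice : HasDerivAt (fun a : ℝ => (a, p.2)) ((1 : ℝ), (0 : ℝ)) p.1 :=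
    (hasDerivAt_id p.1).prodMk (hasDerivAt_const p.1 p.2)
  exact ((hf p hp).differentiableAt (hU.mem_nhds hp)).hasFDerivAt.comp_hasDerivAt p.1 hslice

theorem differentiableAt_slice_fst (hU : IsOpen U)
    (hf : DifferentiableOn ℝ (fun p : ℝ × ℝ => f p.1 p.2) U) {a b : ℝ} (hab : (a, b) ∈ U) :
    DifferentiableAt ℝ (fun a' => f a' b) a :=
  (hasDerivAt_fderiv_apply_slice_fst hU hf hab).differentiableAt

theorem ContDiffOn.deriv_slice_fst {m n : WithTop ℕ∞} (hU : IsOpen U)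
    (hf : ContDiffOn ℝ n (fun p : ℝ × ℝ => f p.1 p.2) U) (hmn : m + 1 ≤ n) :
    ContDiffOn ℝ m (fun p : ℝ × ℝ => deriv (fun a => f a p.2) p.1) U := by
  have hn : n ≠ 0 := ne_bot_of_le_ne_bot (by simp) hmn
  refine ((hf.fderiv_of_isOpen hU hmn).clm_apply
    (contDiffOn_const (c := ((1 : ℝ), (0 : ℝ))))).congr fun p hp => ?_
  exact (hasDerivAt_fderiv_apply_slice_fst hU (hf.differentiableOn hn) hp).deriv

end PartialDerivatives

section ConvexInOneVariable

variable {f : ℝ → ℝ → ℝ} {U : Set (ℝ × ℝ)} {s t : Set ℝ}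

theorem exists_pos_mul_sq_le_sub_sub_deriv_mul_fst (hU : IsOpen U)
    (hf : ContDiffOn ℝ 2 (fun p : ℝ × ℝ => f p.1 p.2) U) (hs : IsCompact s) (hs' : s.OrdConnected)
    (ht : IsCompact t) (hstU : s ×ˢ t ⊆ U)
    (hpos : ∀ a ∈ s, ∀ b ∈ t, 0 < deriv (fun a' => deriv (fun a'' => f a'' b) a') a) :
    ∃ c > 0, ∀ a ∈ s, ∀ a' ∈ s, ∀ b ∈ t,
      c * (a - a') ^ 2 ≤ f a b - f a' b - deriv (fun x => f x b) a' * (a - a') := by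
  have hf₁ : ContDiffOn ℝ 1 (fun p : ℝ × ℝ => deriv (fun a => f a p.2) p.1) U :=
    hf.deriv_slice_fst hU (by norm_num)
  have hf₂ : ContinuousOn
      (fun p : ℝ × ℝ => deriv (fun a' => deriv (fun a'' => f a'' p.2) a') p.1) U :=
    (hf₁.deriv_slice_fst (f := fun a b => deriv (fun a' => f a' b) a) (m := 0) hU
      le_rfl).continuousOn
  obtain ⟨c, hc, hc_le⟩ := (hs.prod ht).exists_forall_le' (hf₂.mono hstU)
    fun p hp => hpos p.1 hp.1 p.2 hp.2
  refine ⟨c / 2, half_pos hc, fun a ha a' ha' b hb => ?_⟩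
  have hmem : ∀ x ∈ uIcc a' a, (x, b) ∈ U := fun x hx => hstU ⟨hs'.uIcc_subset ha' ha hx, hb⟩
  have := mul_sq_le_sub_sub_mul_of_le_deriv2 (g := fun x => f x b)
    (fun x hx => (differentiableAt_slice_fst hU (hf.differentiableOn (by norm_num))
      (hmem x hx)).hasDerivAt)
    (fun x hx => (differentiableAt_slice_fst (f := fun a b => deriv (fun a' => f a' b) a) hU
      (hf₁.differentiableOn (by norm_num)) (hmem x hx)).hasDerivAt)
    (fun x hx => hc_le (x, b) ⟨hs'.uIcc_subset ha' ha hx, hb⟩)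
  linarith

theorem exists_pos_mul_sq_le_sub_sub_deriv_mul_snd (hU : IsOpen U)
    (hf : ContDiffOn ℝ 2 (fun p : ℝ × ℝ => f p.1 p.2) U) (hs : IsCompact s)
    (ht : IsCompact t) (ht' : t.OrdConnected) (hstU : s ×ˢ t ⊆ U)
    (hneg : ∀ a ∈ s, ∀ b ∈ t, deriv (fun b' => deriv (fun b'' => f a b'') b') b < 0) :
    ∃ c > 0, ∀ a ∈ s, ∀ b ∈ t, ∀ b' ∈ t,
      c * (b - b') ^ 2 ≤ f a b - f a b' - deriv (fun y => f a y) b * (b - b') := by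
  obtain ⟨c, hc, hc_le⟩ := exists_pos_mul_sq_le_sub_sub_deriv_mul_fst (f := fun b a => -f a b)
    (hU.preimage continuous_swap)
    (hf.comp (contDiff_snd.prodMk contDiff_fst).contDiffOn (mapsTo_preimage _ _)).neg
    ht ht' hs (fun p hp => hstU ⟨hp.2, hp.1⟩)
    (fun b hb a ha => by simpa only [deriv.fun_neg', neg_pos] using hneg a ha b hb)
  refine ⟨c, hc, fun a ha b hb b' hb' => ?_⟩
  have := hc_le b' hb' b hb a ha
  simp only [deriv.fun_neg'] at this
  linarith

end ConvexInOneVariable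

/-- `(f)(ω|ω̄) + (ρη - ρ̄η̄)(θ - θ̄)` for a single component with free energy `f`, where
`ω = (a, b)`, `ω̄ = (a', b')` and `ρη = -∂_θ f`. -/
noncomputable def relativeEntropyDensity (f : ℝ → ℝ → ℝ) (a b a' b' : ℝ) : ℝ :=
  f a b - f a' b' - deriv (fun x => f x b') a' * (a - a') - deriv (fun y => f a' y) b' * (b - b')
    + (-deriv (fun y => f a y) b - -deriv (fun y => f a' y) b') * (b - b')

theorem exists_pos_mul_le_relativeEntropyDensity {f : ℝ → ℝ → ℝ} {U : Set (ℝ × ℝ)}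
    {s t : Set ℝ} (hU : IsOpen U) (hf : ContDiffOn ℝ 2 (fun p : ℝ × ℝ => f p.1 p.2) U)
    (hs : IsCompact s) (hs' : s.OrdConnected) (ht : IsCompact t) (ht' : t.OrdConnected)
    (hstU : s ×ˢ t ⊆ U)
    (hpos : ∀ a ∈ s, ∀ b ∈ t, 0 < deriv (fun a' => deriv (fun a'' => f a'' b) a') a)
    (hneg : ∀ a ∈ s, ∀ b ∈ t, deriv (fun b' => deriv (fun b'' => f a b'') b') b < 0) :
    ∃ c > 0, ∀ a ∈ s, ∀ a' ∈ s, ∀ b ∈ t, ∀ b' ∈ t,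
      c * ((a - a') ^ 2 + (b - b') ^ 2) ≤ relativeEntropyDensity f a b a' b' := by
  obtain ⟨c₁, hc₁, hρ⟩ := exists_pos_mul_sq_le_sub_sub_deriv_mul_fst hU hf hs hs' ht hstU hpos
  obtain ⟨c₂, hc₂, hθ⟩ := exists_pos_mul_sq_le_sub_sub_deriv_mul_snd hU hf hs ht ht' hstU hneg
  refine ⟨min c₁ c₂, lt_min hc₁ hc₂, fun a ha a' ha' b hb b' hb' => ?_⟩
  have hρ' := (mul_le_mul_of_nonneg_right (min_le_left c₁ c₂) (sq_nonneg (a - a'))).trans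
    (hρ a ha a' ha' b' hb')
  have hθ' := (mul_le_mul_of_nonneg_right (min_le_right c₁ c₂) (sq_nonneg (b - b'))).trans
    (hθ a ha b hb b' hb')
  rw [relativeEntropyDensity]
  linarith

theorem sum_relativeEntropyDensity {ι : Type*} [Fintype ι] (f : ι → ℝ → ℝ → ℝ) (ρ ρ' : ι → ℝ)
    (θ θ' : ℝ) :
    ∑ i, relativeEntropyDensity (f i) (ρ i) θ (ρ' i) θ' =
      (∑ i, (f i (ρ i) θ - f i (ρ' i) θ'
          - deriv (fun a => f i a θ') (ρ' i) * (ρ i - ρ' i)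
          - deriv (fun b => f i (ρ' i) b) θ' * (θ - θ')))
        + ((∑ i, -(deriv (fun b => f i (ρ i) b) θ))
          - ∑ i, -(deriv (fun b => f i (ρ' i) b) θ')) * (θ - θ') := by
  unfold relativeEntropyDensity
  rw [Finset.sum_add_distrib, ← Finset.sum_sub_distrib, ← Finset.sum_mul]

theorem relative_entropy_quadratic_lower_bound_general
    (n : ℕ) (hn : 1 ≤ n)
    (γ M : ℝ)
    (f : Fin n → ℝ → ℝ → ℝ)
    (U : Set (ℝ × ℝ)) (hUopen : IsOpen U)
    (hUnbhd : Set.Icc (0 : ℝ) M ×ˢ Set.Icc γ M ⊆ U)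
    (hf : ∀ i, ContDiffOn ℝ 3 (fun p : ℝ × ℝ => f i p.1 p.2) U)
    (hGibbs : ∀ i, ∀ a ∈ Set.Icc (0 : ℝ) M, ∀ b ∈ Set.Icc γ M,
      0 < deriv (fun a' => deriv (fun a'' => f i a'' b) a') a
      ∧ deriv (fun b' => deriv (fun b'' => f i a b'') b') b < 0) :
    ∃ C : ℝ, 0 < C ∧
      ∀ (ρ ρ' : Fin n → ℝ) (θ θ' : ℝ),
        (∀ i, ρ i ∈ Set.Icc (0 : ℝ) M) →
        (∀ i, ρ' i ∈ Set.Icc (0 : ℝ) M) →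
        (∑ i, ρ i) ∈ Set.Icc γ M →
        (∑ i, ρ' i) ∈ Set.Icc γ M →
        θ ∈ Set.Icc γ M →
        θ' ∈ Set.Icc γ M →
        (∑ i, (f i (ρ i) θ - f i (ρ' i) θ'
              - deriv (fun a => f i a θ') (ρ' i) * (ρ i - ρ' i)
              - deriv (fun b => f i (ρ' i) b) θ' * (θ - θ')))
          + ((∑ i, -(deriv (fun b => f i (ρ i) b) θ))
              - ∑ i, -(deriv (fun b => f i (ρ' i) b) θ')) * (θ - θ')
        ≥ C * ((∑ i, |ρ i - ρ' i| ^ 2) + |θ - θ'| ^ 2) := by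
  choose c hc_pos hc using fun i => exists_pos_mul_le_relativeEntropyDensity hUopen
    ((hf i).of_le (by norm_num)) isCompact_Icc ordConnected_Icc isCompact_Icc ordConnected_Icc
    hUnbhd (fun a ha b hb => (hGibbs i a ha b hb).1) (fun a ha b hb => (hGibbs i a ha b hb).2)
  have hne : (Finset.univ : Finset (Fin n)).Nonempty := ⟨⟨0, hn⟩, Finset.mem_univ _⟩
  set C := Finset.univ.inf' hne c
  have hC : 0 < C := (Finset.lt_inf'_iff hne).2 fun i _ => hc_pos i
  refine ⟨C, hC, fun ρ ρ' θ θ' hρ hρ' _ _ hθ hθ' => ?_⟩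
  have hn' : (1 : ℝ) ≤ n := by exact_mod_cast hn
  rw [← sum_relativeEntropyDensity, ge_iff_le]
  calc C * ((∑ i, |ρ i - ρ' i| ^ 2) + |θ - θ'| ^ 2)
      ≤ C * ((∑ i, (ρ i - ρ' i) ^ 2) + n * (θ - θ') ^ 2) := by
        simp only [sq_abs]
        gcongr
        exact le_mul_of_one_le_left (sq_nonneg _) hn'
    _ = ∑ i, C * ((ρ i - ρ' i) ^ 2 + (θ - θ') ^ 2) := by
        simp only [mul_add, Finset.sum_add_distrib, Finset.mul_sum, Finset.sum_const,
          Finset.card_univ, Fintype.card_fin, nsmul_eq_mul]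
        ring
    _ ≤ ∑ i, relativeEntropyDensity (f i) (ρ i) θ (ρ' i) θ' := Finset.sum_le_sum fun i _ =>
        (mul_le_mul_of_nonneg_right (Finset.inf'_le c (Finset.mem_univ i)) (by positivity)).trans
          (hc i (ρ i) (hρ i) (ρ' i) (hρ' i) θ hθ θ' hθ')

theorem relative_entropy_quadratic_lower_bound
    (n : ℕ) (hn : 1 ≤ n)
    (γ M : ℝ) (hγ : 0 < γ) (hγM : γ ≤ M)
    (f : Fin n → ℝ → ℝ → ℝ)
    (U : Set (ℝ × ℝ)) (hUopen : IsOpen U)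
    (hUnbhd : Set.Icc (0 : ℝ) M ×ˢ Set.Icc γ M ⊆ U)
    (hf : ∀ i, ContDiffOn ℝ 3 (fun p : ℝ × ℝ => f i p.1 p.2) U)
    (hGibbs : ∀ i, ∀ a ∈ Set.Icc (0 : ℝ) M, ∀ b ∈ Set.Icc γ M,
      0 < deriv (fun a' => deriv (fun a'' => f i a'' b) a') a
      ∧ deriv (fun b' => deriv (fun b'' => f i a b'') b') b < 0) :
    ∃ C : ℝ, 0 < C ∧
      ∀ (ρ ρ' : Fin n → ℝ) (θ θ' : ℝ),
        (∀ i, ρ i ∈ Set.Icc (0 : ℝ) M) →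
        (∀ i, ρ' i ∈ Set.Icc (0 : ℝ) M) →
        (∑ i, ρ i) ∈ Set.Icc γ M →
        (∑ i, ρ' i) ∈ Set.Icc γ M →
        θ ∈ Set.Icc γ M →
        θ' ∈ Set.Icc γ M →
        (∑ i, (f i (ρ i) θ - f i (ρ' i) θ'
              - deriv (fun a => f i a θ') (ρ' i) * (ρ i - ρ' i)
              - deriv (fun b => f i (ρ' i) b) θ' * (θ - θ')))
          + ((∑ i, -(deriv (fun b => f i (ρ i) b) θ))
              - ∑ i, -(deriv (fun b => f i (ρ' i) b) θ')) * (θ - θ')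
        ≥ C * ((∑ i, |ρ i - ρ' i| ^ 2) + |θ - θ'| ^ 2) :=
  relative_entropy_quadratic_lower_bound_general n hn γ M f U hUopen hUnbhd hf hGibbs
end

section
/- Let f_1,…,f_n be C¹ functions of (ρ, θ) on an open domain, and define for each i: the chemical potential μ_i = ∂_ρ f_i, the partial entropy density s_i(ρ, θ) = −∂_θ f_i(ρ, θ), and the internal energy density e_i(ρ, θ) = f_i(ρ, θ) − θ ∂_θ f_i(ρ, θ). Let ρ_1,…,ρ_n, ρ̄_1,…,ρ̄_n ≥ 0, θ, θ̄ > 0 and v_1,…,v_n, v̄_1,…,v̄_n ∈ ℝ³ be such that all points lie in the domain. Then: −Σ_{i=1}^n (ρ_i − ρ̄_i)(μ_i(ρ̄_i, θ̄) − ½|v̄_i|²) − Σ_{i=1}^n (ρ_i v_i − ρ̄_i v̄_i)·v̄_i + ( Σ_{i=1}^n e_i(ρ_i, θ) + ½ Σ_{i=1}^n ρ_i |v_i|² ) − ( Σ_{i=1}^n e_i(ρ̄_i, θ̄) + ½ Σ_{i=1}^n ρ̄_i |v̄_i|² ) − ( Σ_{i=1}^n s_i(ρ_i, θ) − Σ_{i=1}^n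 s_i(ρ̄_i, θ̄) ) θ̄ = ½ Σ_{i=1}^n ρ_i |v_i − v̄_i|² + Σ_{i=1}^n [ f_i(ρ_i, θ) − f_i(ρ̄_i, θ̄) − ∂_ρ f_i(ρ̄_i, θ̄)(ρ_i − ρ̄_i) − ∂_θ f_i(ρ̄_i, θ̄)(θ − θ̄) ] + ( Σ_{i=1}^n s_i(ρ_i, θ) − Σ_{i=1}^n s_i(ρ̄_i, θ̄) )(θ − θ̄). -/
open scoped RealInnerProductSpace

/-!
The identity holds species by species. Once `μ`, `s` and `e` are expressed through `f`, the
thermodynamic terms are linear in `f`, `∂_ρ f` and `∂_θ f` and cancel by ring arithmetic, while the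
kinetic terms reduce to `ρ` times the expansion `‖v - v̄‖² = ‖v‖² - 2⟪v, v̄⟫ + ‖v̄‖²`.
-/

theorem relative_kinetic_energy_eq {E : Type*} [NormedAddCommGroup E] [InnerProductSpace ℝ E]
    (ρ ρ' : ℝ) (v v' : E) :
    (ρ - ρ') * (1 / 2 * ‖v'‖ ^ 2) - ⟪ρ • v - ρ' • v', v'⟫
      + 1 / 2 * (ρ * ‖v‖ ^ 2) - 1 / 2 * (ρ' * ‖v'‖ ^ 2)
    = 1 / 2 * (ρ * ‖v - v'‖ ^ 2) := by
  rw [inner_sub_left, real_inner_smul_left, real_inner_smul_left, real_inner_self_eq_norm_sq,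
    norm_sub_sq_real]
  ring

theorem relative_entropy_algebraic_identity_general
    (n : ℕ)
    (f : Fin n → ℝ → ℝ → ℝ)
    (μ s e : Fin n → ℝ → ℝ → ℝ)
    (hμ : ∀ i a b, μ i a b = deriv (fun a' => f i a' b) a)
    (hs : ∀ i a b, s i a b = -(deriv (fun b' => f i a b') b))
    (he : ∀ i a b, e i a b = f i a b - b * deriv (fun b' => f i a b') b)
    (ρ ρ' : Fin n → ℝ)
    (θ θ' : ℝ)
    (v v' : Fin n → EuclideanSpace ℝ (Fin 3)) :
    -(∑ i, (ρ i - ρ' i) * (μ i (ρ' i) θ' - (1 / 2) * ‖v' i‖ ^ 2))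
      - (∑ i, ⟪ρ i • v i - ρ' i • v' i, v' i⟫)
      + ((∑ i, e i (ρ i) θ) + (1 / 2) * ∑ i, ρ i * ‖v i‖ ^ 2)
      - ((∑ i, e i (ρ' i) θ') + (1 / 2) * ∑ i, ρ' i * ‖v' i‖ ^ 2)
      - ((∑ i, s i (ρ i) θ) - ∑ i, s i (ρ' i) θ') * θ'
    = (1 / 2) * ∑ i, ρ i * ‖v i - v' i‖ ^ 2
      + (∑ i, (f i (ρ i) θ - f i (ρ' i) θ'
            - deriv (fun a => f i a θ') (ρ' i) * (ρ i - ρ' i)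
            - deriv (fun b => f i (ρ' i) b) θ' * (θ - θ')))
      + ((∑ i, s i (ρ i) θ) - ∑ i, s i (ρ' i) θ') * (θ - θ') := by
  simp only [Finset.mul_sum, Finset.sum_mul, ← Finset.sum_neg_distrib, ← Finset.sum_sub_distrib,
    ← Finset.sum_add_distrib]
  refine Finset.sum_congr rfl fun i _ => ?_
  rw [hμ, hs, hs, he, he]
  linear_combination relative_kinetic_energy_eq (ρ i) (ρ' i) (v i) (v' i)

theorem relative_entropy_algebraic_identity
    (n : ℕ) (hn : 1 ≤ n)
    (f : Fin n → ℝ → ℝ → ℝ)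
    (hfC1 : ∀ i, ContDiff ℝ 1 (fun q : ℝ × ℝ => f i q.1 q.2))
    (μ s e : Fin n → ℝ → ℝ → ℝ)
    (hμ : ∀ i a b, μ i a b = deriv (fun a' => f i a' b) a)
    (hs : ∀ i a b, s i a b = -(deriv (fun b' => f i a b') b))
    (he : ∀ i a b, e i a b = f i a b - b * deriv (fun b' => f i a b') b)
    (ρ ρ' : Fin n → ℝ) (hρ : ∀ i, 0 ≤ ρ i) (hρ' : ∀ i, 0 ≤ ρ' i)
    (θ θ' : ℝ) (hθ : 0 < θ) (hθ' : 0 < θ')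
    (v v' : Fin n → EuclideanSpace ℝ (Fin 3)) :
    -(∑ i, (ρ i - ρ' i) * (μ i (ρ' i) θ' - (1 / 2) * ‖v' i‖ ^ 2))
      - (∑ i, ⟪ρ i • v i - ρ' i • v' i, v' i⟫)
      + ((∑ i, e i (ρ i) θ) + (1 / 2) * ∑ i, ρ i * ‖v i‖ ^ 2)
      - ((∑ i, e i (ρ' i) θ') + (1 / 2) * ∑ i, ρ' i * ‖v' i‖ ^ 2)
      - ((∑ i, s i (ρ i) θ) - ∑ i, s i (ρ' i) θ') * θ'
    = (1 / 2) * ∑ i, ρ i * ‖v i - v' i‖ ^ 2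
      + (∑ i, (f i (ρ i) θ - f i (ρ' i) θ'
            - deriv (fun a => f i a θ') (ρ' i) * (ρ i - ρ' i)
            - deriv (fun b => f i (ρ' i) b) θ' * (θ - θ')))
      + ((∑ i, s i (ρ i) θ) - ∑ i, s i (ρ' i) θ') * (θ - θ') :=
  relative_entropy_algebraic_identity_general n f μ s e hμ hs he ρ ρ' θ θ' v v'
end

section
/- Let n ≥ 1, let b_{ij} = b_{ji} ∈ ℝ (1 ≤ i, j ≤ n), let θ, θ̄ ∈ ℝ, ρ_1,…,ρ_n, ρ̄_1,…,ρ̄_n ∈ ℝ, and v_1,…,v_n, v̄_1,…,v̄_n ∈ ℝ³. Then the following identity holds: Σ_{i,j} θ b_{ij} ρ_i ρ_j (v_i − v_j)·v̄_i − Σ_{i,j} θ̄ b_{ij} ρ̄_i ρ̄_j (v̄_i − v̄_j)·v̄_i − ½ Σ_{i,j} θ̄ b_{ij} ρ_i ρ_j |v_i − v_j|² + ½ Σ_{i,j} θ̄ b_{ij} ρ̄_i ρ̄_j |v̄_i − v̄_j|² + Σ_{i,j} θ̄ b_{ij} ρ_i ρ̄_j (v_i − v̄_i)·(v̄_i − v̄_j)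 − ½ Σ_{i,j} b_{ij} ρ̄_i ρ̄_j |v̄_i − v̄_j|² (θ − θ̄) = −½ Σ_{i,j} θ̄ b_{ij} ρ_i ρ_j |(v_i − v_j) − (v̄_i − v̄_j)|² − Σ_{i,j} θ̄ b_{ij} ρ_i (ρ_j − ρ̄_j)(v_i − v̄_i)·(v̄_i − v̄_j) + Σ_{i,j} (θ − θ̄) b_{ij} ρ_i ρ_j (v_i − v̄_i)·(v̄_i − v̄_j) + Σ_{i,j} (θ − θ̄) b_{ij} (ρ_i − ρ̄_i) ρ̄_j (v̄_i − v̄_j)·v̄_i + Σ_{i,j} (θ − θ̄) b_{ij} ρ_i (ρ_j − ρ̄_j)(v̄_i − v̄_j)·v̄_i, where all sums run over i, j ∈ {1,…,n}. -/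
open scoped RealInnerProductSpace

/-!
Both sides are double sums over `(i, j)`, and a double sum over a square index set only
depends on the symmetrized summand `f i j + f j i`. Since `b` is symmetric, after expanding
the inner products the symmetrized summands of the two sides agree by `ring`.
-/

namespace Finset

variable {ι M : Type*} [AddCommMonoid M]

theorem two_nsmul_sum_sum (s : Finset ι) (f : ι → ι → M) :
    2 • ∑ i ∈ s, ∑ j ∈ s, f i j = ∑ i ∈ s, ∑ j ∈ s, (f i j + f j i) := by
  rw [two_nsmul]
  nth_rewrite 2 [sum_comm]
  simp only [sum_add_distrib]

theorem sum_sum_eq_of_add_swap_eq [IsAddTorsionFree M] (s : Finset ι) {f g : ι → ι → M}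
    (h : ∀ i ∈ s, ∀ j ∈ s, f i j + f j i = g i j + g j i) :
    ∑ i ∈ s, ∑ j ∈ s, f i j = ∑ i ∈ s, ∑ j ∈ s, g i j := by
  apply nsmul_right_injective two_ne_zero
  simp only [two_nsmul_sum_sum]
  exact sum_congr rfl fun i hi => sum_congr rfl fun j hj => h i hi j hj

end Finset

theorem friction_terms_identity_general
    (n : ℕ)
    (b : Fin n → Fin n → ℝ)
    (hbsymm : ∀ i j, b i j = b j i)
    (θ θ' : ℝ)
    (ρ ρ' : Fin n → ℝ)
    (v v' : Fin n → EuclideanSpace ℝ (Fin 3)) :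
    (∑ i, ∑ j, θ * b i j * ρ i * ρ j * ⟪v i - v j, v' i⟫)
      - (∑ i, ∑ j, θ' * b i j * ρ' i * ρ' j * ⟪v' i - v' j, v' i⟫)
      - (1 / 2) * (∑ i, ∑ j, θ' * b i j * ρ i * ρ j * ‖v i - v j‖ ^ 2)
      + (1 / 2) * (∑ i, ∑ j, θ' * b i j * ρ' i * ρ' j * ‖v' i - v' j‖ ^ 2)
      + (∑ i, ∑ j, θ' * b i j * ρ i * ρ' j * ⟪v i - v' i, v' i - v' j⟫)
      - (1 / 2) * (∑ i, ∑ j, b i j * ρ' i * ρ' j * ‖v' i - v' j‖ ^ 2 * (θ - θ'))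
    = -(1 / 2) * (∑ i, ∑ j, θ' * b i j * ρ i * ρ j
          * ‖(v i - v j) - (v' i - v' j)‖ ^ 2)
      - (∑ i, ∑ j, θ' * b i j * ρ i * (ρ j - ρ' j) * ⟪v i - v' i, v' i - v' j⟫)
      + (∑ i, ∑ j, (θ - θ') * b i j * ρ i * ρ j * ⟪v i - v' i, v' i - v' j⟫)
      + (∑ i, ∑ j, (θ - θ') * b i j * (ρ i - ρ' i) * ρ' j * ⟪v' i - v' j, v' i⟫)
      + (∑ i, ∑ j, (θ - θ') * b i j * ρ i * (ρ j - ρ' j) * ⟪v' i - v' j, v' i⟫) := by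
  simp only [Finset.mul_sum, ← Finset.sum_sub_distrib, ← Finset.sum_add_distrib]
  refine Finset.sum_sum_eq_of_add_swap_eq _ fun i _ j _ => ?_
  rw [hbsymm j i]
  simp only [← real_inner_self_eq_norm_sq, inner_sub_left, inner_sub_right, real_inner_comm]
  ring

theorem friction_terms_identity
    (n : ℕ) (hn : 1 ≤ n)
    (b : Fin n → Fin n → ℝ)
    (hbsymm : ∀ i j, b i j = b j i)
    (θ θ' : ℝ)
    (ρ ρ' : Fin n → ℝ)
    (v v' : Fin n → EuclideanSpace ℝ (Fin 3)) :
    (∑ i, ∑ j, θ * b i j * ρ i * ρ j * ⟪v i - v j, v' i⟫)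
      - (∑ i, ∑ j, θ' * b i j * ρ' i * ρ' j * ⟪v' i - v' j, v' i⟫)
      - (1 / 2) * (∑ i, ∑ j, θ' * b i j * ρ i * ρ j * ‖v i - v j‖ ^ 2)
      + (1 / 2) * (∑ i, ∑ j, θ' * b i j * ρ' i * ρ' j * ‖v' i - v' j‖ ^ 2)
      + (∑ i, ∑ j, θ' * b i j * ρ i * ρ' j * ⟪v i - v' i, v' i - v' j⟫)
      - (1 / 2) * (∑ i, ∑ j, b i j * ρ' i * ρ' j * ‖v' i - v' j‖ ^ 2 * (θ - θ'))
    = -(1 / 2) * (∑ i, ∑ j, θ' * b i j * ρ i * ρ j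
          * ‖(v i - v j) - (v' i - v' j)‖ ^ 2)
      - (∑ i, ∑ j, θ' * b i j * ρ i * (ρ j - ρ' j) * ⟪v i - v' i, v' i - v' j⟫)
      + (∑ i, ∑ j, (θ - θ') * b i j * ρ i * ρ j * ⟪v i - v' i, v' i - v' j⟫)
      + (∑ i, ∑ j, (θ - θ') * b i j * (ρ i - ρ' i) * ρ' j * ⟪v' i - v' j, v' i⟫)
      + (∑ i, ∑ j, (θ - θ') * b i j * ρ i * (ρ j - ρ' j) * ⟪v' i - v' j, v' i⟫) :=
  friction_terms_identity_general n b hbsymm θ θ' ρ ρ' v v'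
end
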